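/- arXiv:2110.09203 — 2 statements merged into one kernel-verified Lean document; each statement's English description precedes it below -/
import Mathlib

section
/- Let R be a commutative local ring, A an Azumaya algebra over R, and V a finitely generated left A-module. Then V is projective as a left A-module if and only if V is free of finite rank as an R-module. -/
open TensorProduct

/-- The canonical map `A ⊗[R] Aᵐᵒᵖ →ₗ[R] End_R(A)`, `(x ⊗ y) · z = x * z * y`. -/
noncomputable def azumayaMap (R A : Type*) [CommRing R] [Ring A] [Algebra R A] :
    A ⊗[R] Aᵐᵒᵖ →ₗ[R] Module.End R A :=
  TensorProduct.lift <| LinearMap.mk₂ R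
    (fun x y => LinearMap.mulLeft R x ∘ₗ LinearMap.mulRight R y.unop)
    (fun x x' y => by ext z; simp [add_mul])
    (fun c x y => by ext z; simp [smul_mul_assoc])
    (fun x y y' => by ext z; simp [mul_add])
    (fun c x y => by ext z; simp [mul_smul_comm, smul_mul_assoc])

/-- Azumaya algebra: finitely generated projective faithful module whose sandwich map
`A ⊗[R] Aᵐᵒᵖ → End_R(A)` is bijective. -/
def IsAzumaya' (R A : Type*) [CommRing R] [Ring A] [Algebra R A] : Prop :=
  Module.Finite R A ∧ Module.Projective R A ∧ FaithfulSMul R A ∧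
    Function.Bijective (azumayaMap R A)

/-- Central simple algebra over a field: finite-dimensional, center `k`, simple. -/
def IsCentralSimple (k A : Type*) [Field k] [Ring A] [Algebra k A] : Prop :=
  FiniteDimensional k A ∧ Subalgebra.center k A = ⊥ ∧ IsSimpleRing A

/-!
Over the local ring `R` the algebra `A` is free. An `A`-projective module is a summand of a free `A`-module,
hence `R`-projective and so `R`-free. Conversely, Nakayama's lemma gives `l : A →ₗ[R] R` with
`l 1 = 1`, and the preimage `e` of `z ↦ l z • 1` under the sandwich isomorphism is a separability
idempotent: `(a ⊗ 1) e = (1 ⊗ a) e` and `e` multiplies out to `1`. Averaging an `R`-linear section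
of `(V →₀ A) → V` by `e` then gives an `A`-linear section.
-/

theorem Module.Projective.trans (R S M : Type*) [CommSemiring R] [Semiring S] [Algebra R S]
    [AddCommMonoid M] [Module R M] [Module S M] [IsScalarTower R S M]
    [Module.Projective R S] [Module.Projective S M] : Module.Projective R M := by
  classical
  obtain ⟨s, hs⟩ := Module.projective_def'.mp ‹Module.Projective S M›
  have : Module.Projective R (M →₀ S) := .of_equiv (finsuppLequivDFinsupp R).symm
  exact .of_split (s.restrictScalars R) ((Finsupp.linearCombination S id).restrictScalars R)
    (by ext v; exact LinearMap.congr_fun hs v)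

theorem exists_linearMap_apply_one_eq_one_of_isLocalRing (R A : Type*) [CommRing R]
    [IsLocalRing R] [Ring A] [Algebra R A] [Module.Finite R A] [Module.Free R A] [Nontrivial A] :
    ∃ l : A →ₗ[R] R, l 1 = 1 := by
  -- By Nakayama `k ⊗ A ≠ 0`, so the ring map `k → k ⊗ A` is injective; over a local ring this
  -- makes `R → A` split.
  let k := IsLocalRing.ResidueField R
  have : Nontrivial (k ⊗[R] A) := not_subsingleton_iff_nontrivial.mp <|
    IsLocalRing.subsingleton_tensorProduct.not.mpr (not_subsingleton A)
  let ι : k →ₐ[R] k ⊗[R] A := Algebra.TensorProduct.includeLeft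
  have hι : (Algebra.linearMap R A).lTensor k =
      ι.toLinearMap ∘ₗ (TensorProduct.rid R k).toLinearMap := by
    ext; simp [ι]
  have hinj : Function.Injective ((Algebra.linearMap R A).lTensor k) := by
    rw [hι]
    exact ι.toRingHom.injective.comp (TensorProduct.rid R k).injective
  obtain ⟨l, hl⟩ := (IsLocalRing.split_injective_iff_lTensor_residueField_injective _).mpr hinj
  exact ⟨l, by simpa using LinearMap.congr_fun hl 1⟩

section Separability

variable {R A : Type*} [CommRing R] [Ring A] [Algebra R A]

variable {V W : Type*} [AddCommGroup V] [Module R V] [Module A V] [IsScalarTower R A V]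
  [AddCommGroup W] [Module R W] [Module A W] [IsScalarTower R A W]

variable (A) in
noncomputable def sandwich (f : V →ₗ[R] W) : A ⊗[R] Aᵐᵒᵖ →ₗ[R] V →ₗ[R] W :=
  TensorProduct.lift <| LinearMap.mk₂ R
    (fun x y => Algebra.lsmul R R W x ∘ₗ f ∘ₗ Algebra.lsmul R R V y.unop)
    (fun x x' y => by ext; simp)
    (fun c x y => by ext; simp)
    (fun x y y' => by ext; simp)
    (fun c x y => by ext; simp [smul_comm c x])

@[simp]
theorem sandwich_tmul_apply (f : V →ₗ[R] W) (x : A) (y : Aᵐᵒᵖ) (v : V) :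
    sandwich A f (x ⊗ₜ y) v = x • f (y.unop • v) := rfl

theorem sandwich_tmul_one_mul_apply (f : V →ₗ[R] W) (a : A) (b : A ⊗[R] Aᵐᵒᵖ) (v : V) :
    sandwich A f ((a ⊗ₜ 1) * b) v = a • sandwich A f b v := by
  induction b using TensorProduct.induction_on with
  | zero => simp
  | add b c hb hc => simp [mul_add, hb, hc]
  | tmul x y => simp [mul_smul]

theorem sandwich_one_tmul_mul_apply (f : V →ₗ[R] W) (a : A) (b : A ⊗[R] Aᵐᵒᵖ) (v : V) :
    sandwich A f ((1 ⊗ₜ MulOpposite.op a) * b) v = sandwich A f b (a • v) := by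
  induction b using TensorProduct.induction_on with
  | zero => simp
  | add b c hb hc => simp [mul_add, hb, hc]
  | tmul x y => simp [mul_smul]

theorem sandwich_id_apply (b : A ⊗[R] Aᵐᵒᵖ) (v : V) :
    sandwich A LinearMap.id b v = AlgHom.mulLeftRight R A b 1 • v := by
  induction b using TensorProduct.induction_on with
  | zero => simp
  | add b c hb hc => simp [hb, hc, add_smul]
  | tmul x y => simp [mul_smul]

theorem comp_sandwich (g : W →ₗ[A] V) (f : V →ₗ[R] W) (b : A ⊗[R] Aᵐᵒᵖ) :
    g.restrictScalars R ∘ₗ sandwich A f b = sandwich A (g.restrictScalars R ∘ₗ f) b := by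
  induction b using TensorProduct.induction_on with
  | zero => simp
  | add b c hb hc => simp [LinearMap.comp_add, hb, hc]
  | tmul x y => ext; simp

variable (R) in
def IsSeparabilityIdempotent (e : A ⊗[R] Aᵐᵒᵖ) : Prop :=
  (∀ a : A, (a ⊗ₜ 1) * e = (1 ⊗ₜ MulOpposite.op a) * e) ∧ AlgHom.mulLeftRight R A e 1 = 1

namespace IsSeparabilityIdempotent

variable {e : A ⊗[R] Aᵐᵒᵖ}

noncomputable def average (he : IsSeparabilityIdempotent R e) (f : V →ₗ[R] W) : V →ₗ[A] W where
  toFun := sandwich A f e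
  map_add' := map_add _
  map_smul' a v := by
    rw [RingHom.id_apply, ← sandwich_tmul_one_mul_apply, he.1, sandwich_one_tmul_mul_apply]

theorem comp_average_eq_id (he : IsSeparabilityIdempotent R e) {g : W →ₗ[A] V} {f : V →ₗ[R] W}
    (hgf : g.restrictScalars R ∘ₗ f = LinearMap.id) : g ∘ₗ he.average f = LinearMap.id := by
  ext v
  have := LinearMap.congr_fun (comp_sandwich g f e) v
  simp only [LinearMap.coe_comp, Function.comp_apply, LinearMap.coe_restrictScalars] at this
  simp [average, this, hgf, sandwich_id_apply, he.2]

variable (V) in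
theorem projective (he : IsSeparabilityIdempotent R e) [Module.Projective R V] :
    Module.Projective A V := by
  let π := Finsupp.linearCombination A (id : V → V)
  obtain ⟨σ, hσ⟩ := Module.projective_lifting_property (π.restrictScalars R) LinearMap.id
    (Finsupp.linearCombination_id_surjective A V)
  exact .of_split (he.average σ) π (he.comp_average_eq_id hσ)

end IsSeparabilityIdempotent

theorem exists_isSeparabilityIdempotent (hA : Function.Bijective (AlgHom.mulLeftRight R A))
    {l : A →ₗ[R] R} (hl : l 1 = 1) : ∃ e : A ⊗[R] Aᵐᵒᵖ, IsSeparabilityIdempotent R e := by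
  obtain ⟨e, he⟩ := hA.2 (l.smulRight 1)
  refine ⟨e, fun a => hA.1 ?_, by simp [he, hl]⟩
  ext z
  simp [he, Module.End.mul_apply]

theorem azumayaMap_eq_mulLeftRight : azumayaMap R A = (AlgHom.mulLeftRight R A).toLinearMap := by
  ext x y z
  simp [azumayaMap, mul_assoc]

end Separability

theorem stmt7 {R A V : Type*} [CommRing R] [IsLocalRing R] [Ring A] [Algebra R A]
    (hA : IsAzumaya' R A)
    [AddCommGroup V] [Module A V] [Module R V] [IsScalarTower R A V] [Module.Finite A V] :
    Module.Projective A V ↔ (Module.Free R V ∧ Module.Finite R V) := by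
  obtain ⟨_, _, _, hbij⟩ := hA
  have : Module.Free R A := Module.free_of_flat_of_isLocalRing
  constructor
  · intro _
    have : Module.Projective R V := .trans R A V
    have : Module.Finite R V := .trans A V
    exact ⟨Module.free_of_flat_of_isLocalRing, inferInstance⟩
  · rintro ⟨_, _⟩
    have : Nontrivial A := (FaithfulSMul.algebraMap_injective R A).nontrivial
    obtain ⟨l, hl⟩ := exists_linearMap_apply_one_eq_one_of_isLocalRing R A
    rw [azumayaMap_eq_mulLeftRight] at hbij
    obtain ⟨e, he⟩ := exists_isSeparabilityIdempotent hbij hl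
    exact he.projective V
end

section
/- Let R be a commutative ring and A an Azumaya algebra over R. Then the center of A equals R (more precisely, the structure map R → Z(A) is an isomorphism). -/
open TensorProduct

/-- Azumaya algebra: finitely generated projective faithful module whose sandwich map
`A ⊗[R] Aᵐᵒᵖ → End_R(A)` is bijective. -/
def IsAzumayaAlg (R A : Type*) [CommRing R] [Ring A] [Algebra R A] : Prop :=
  Module.Finite R A ∧ Module.Projective R A ∧ FaithfulSMul R A ∧
    Function.Bijective (azumayaMap R A)

/-! A finite, flat, faithful module is faithfully flat (Nakayama). Over a faithfully flat
`R`-algebra `A` the sequence `R → A → A ⊗[R] A`, `a ↦ a ⊗ 1 - 1 ⊗ a`, is exact: after applying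
`A ⊗[R] -` it is split by `a ⊗ (b ⊗ c) ↦ a c ⊗ b`, and faithful flatness reflects exactness.
For central `z`, the elements `z ⊗ 1` and `1 ⊗ op z` of `A ⊗[R] Aᵐᵒᵖ` act identically on `A`, so
injectivity of the sandwich map makes `z ⊗ 1 = 1 ⊗ z`, i.e. `z` lies in the image of `R`. -/

theorem Module.FaithfullyFlat.of_finite_of_faithfulSMul {R M : Type*} [CommRing R]
    [AddCommGroup M] [Module R M] [Module.Finite R M] [Module.Flat R M] [FaithfulSMul R M] :
    Module.FaithfullyFlat R M where
  submodule_ne_top m hm hm_top := by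
    -- Nakayama: some `r ≡ 1 mod m` kills `M`, so `r = 0` by faithfulness and `1 ∈ m`.
    obtain ⟨r, hr_one, hr_zero⟩ := Submodule.exists_sub_one_mem_and_smul_eq_zero_of_fg_of_le_smul
      m ⊤ (Module.Finite.fg_top (R := R) (M := M)) hm_top.ge
    have hr : r = 0 := eq_of_smul_eq_smul fun x : M => by rw [hr_zero x trivial, zero_smul]
    have h1 : (1 : R) ∈ m := by simpa [hr] using m.neg_mem hr_one
    exact hm.ne_top ((Ideal.eq_top_iff_one m).mpr h1)

namespace Algebra

open Algebra.TensorProduct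

variable {R S : Type*} [CommRing R] [Ring S] [Algebra R S]

lemma lTensor_includeLeftSubRight_retraction :
    ∃ φ : S ⊗[R] (S ⊗[R] S) →ₗ[R] S ⊗[R] S, ∀ t : S ⊗[R] S,
      φ ((includeLeftSubRight R S).lTensor S t) = t - LinearMap.mul' R S t ⊗ₜ 1 := by
  refine ⟨LinearMap.rTensor S (LinearMap.mul' R S) ∘ₗ
    (_root_.TensorProduct.assoc R S S S).symm.toLinearMap ∘ₗ
    LinearMap.lTensor S (_root_.TensorProduct.comm R S S).toLinearMap, fun t => ?_⟩
  induction t using TensorProduct.induction_on with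
  | zero => simp
  | tmul a b => simp [tmul_sub]
  | add x y hx hy => simp only [map_add, hx, hy, add_tmul]; abel

lemma exact_lTensor_linearMap_includeLeftSubRight :
    Function.Exact ((Algebra.linearMap R S).lTensor S) ((includeLeftSubRight R S).lTensor S) := by
  obtain ⟨φ, hφ⟩ := lTensor_includeLeftSubRight_retraction (R := R) (S := S)
  refine fun t => ⟨fun ht => ⟨LinearMap.mul' R S t ⊗ₜ 1, ?_⟩, ?_⟩
  · have ht_eq := hφ t
    rw [ht, map_zero, eq_comm, sub_eq_zero] at ht_eq
    rw [LinearMap.lTensor_tmul, Algebra.linearMap_apply, map_one, ← ht_eq]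
  · rintro ⟨s, rfl⟩
    rw [← LinearMap.comp_apply, ← LinearMap.lTensor_comp]
    have hcomp : includeLeftSubRight R S ∘ₗ Algebra.linearMap R S = 0 := by
      ext; simp
    rw [hcomp, LinearMap.lTensor_zero, LinearMap.zero_apply]

theorem IsEffective.of_faithfullyFlat_of_ring [Module.FaithfullyFlat R S] : IsEffective R S :=
  Module.FaithfullyFlat.lTensor_reflects_exact R S _ _ exact_lTensor_linearMap_includeLeftSubRight

end Algebra

section Azumaya

open Algebra.TensorProduct (includeLeftSubRight)

variable {R A : Type*} [CommRing R] [Ring A] [Algebra R A]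

@[simp]
lemma azumayaMap_tmul (x : A) (y : Aᵐᵒᵖ) (z : A) :
    azumayaMap R A (x ⊗ₜ y) z = x * z * y.unop := by
  simp [azumayaMap, mul_assoc]

lemma tmul_one_eq_one_tmul_op_of_mem_center (hinj : Function.Injective (azumayaMap R A))
    {z : A} (hz : z ∈ Subalgebra.center R A) :
    z ⊗ₜ[R] (1 : Aᵐᵒᵖ) = 1 ⊗ₜ MulOpposite.op z :=
  hinj <| LinearMap.ext fun w => by simp [(Subalgebra.mem_center_iff.mp hz w).symm]

lemma includeLeftSubRight_eq_zero_of_mem_center (hinj : Function.Injective (azumayaMap R A))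
    {z : A} (hz : z ∈ Subalgebra.center R A) : includeLeftSubRight R A z = 0 := by
  have h := congrArg (map LinearMap.id (MulOpposite.opLinearEquiv R).symm.toLinearMap)
    (tmul_one_eq_one_tmul_op_of_mem_center hinj hz)
  simpa [sub_eq_zero] using h

theorem center_eq_bot_of_injective_azumayaMap [Module.FaithfullyFlat R A]
    (hinj : Function.Injective (azumayaMap R A)) : Subalgebra.center R A = ⊥ :=
  eq_bot_iff.mpr fun z hz => Algebra.mem_bot.mpr <|
    (Algebra.IsEffective.of_faithfullyFlat_of_ring z).mp
      (includeLeftSubRight_eq_zero_of_mem_center hinj hz)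

end Azumaya

theorem stmt18 {R A : Type*} [CommRing R] [Ring A] [Algebra R A] (hA : IsAzumayaAlg R A) :
    Subalgebra.center R A = ⊥ := by
  obtain ⟨_, _, _, hbij⟩ := hA
  have : Module.FaithfullyFlat R A := .of_finite_of_faithfulSMul
  exact center_eq_bot_of_injective_azumayaMap hbij.injective
end
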